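/- arXiv:2205.07217 — 2 statements merged into one kernel-verified Lean document; each statement's English description precedes it below -/
import Mathlib

section
/- Let f = f̄ − f̲ where f̄ is normalized, nondecreasing, and α-weakly DR-submodular and f̲ is normalized, nondecreasing, and β-weakly DR-supermodular. Let g be the Lovász subgradient vector at x ∈ [0,1]^n, i.e., g_{π(i)} = f(A_i) − f(A_{i−1}) along the decreasing-order chain of x. Then for every A ⊆ [n], g(A) := Σ_{i∈A} g_i ≤ (1/α) f̄(A) − β f̲(A). -/
/-!
Compare `g` with `Φ = (1/α) f̄ − β f̲` along the chain `A ∩ A_0 ⊆ A ∩ A_1 ⊆ ⋯ ⊆ A ∩ A_n`.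
When `π(k) ∈ A`, the step of `g(A)` at `π(k)` is the marginal of `f` at `π(k)` on top of
`A_{k-1}`, while `Φ` grows by its marginal on top of the smaller set `A ∩ A_{k-1}`; weak
DR-submodularity of `f̄` and weak DR-supermodularity of `f̲` make the first at most the second.
When `π(k) ∉ A` both steps vanish. Summing, `g(A)` is at most the telescoped increment
`Φ(A) − Φ(∅) = Φ(A)`.
-/

/-- The chain `A_i = {π(1),…,π(i)}` induced by a sorting permutation `π`. -/
def lovaszChain (n : ℕ) (π : Equiv.Perm (Fin n)) (i : ℕ) : Finset (Fin n) :=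
  Finset.univ.filter (fun a : Fin n => ((π.symm a : ℕ)) < i)

open Finset

section WeaklyDR

variable {ι : Type*} [DecidableEq ι]

def IsWeaklyDRSubmodular (α : ℝ) (F : Finset ι → ℝ) : Prop :=
  ∀ A B : Finset ι, A ⊆ B → ∀ i ∉ B, F (insert i A) - F A ≥ α * (F (insert i B) - F B)

def IsWeaklyDRSupermodular (β : ℝ) (F : Finset ι → ℝ) : Prop :=
  ∀ A B : Finset ι, A ⊆ B → ∀ i ∉ B, F (insert i B) - F B ≥ β * (F (insert i A) - F A)

theorem sub_marginal_le_of_isWeaklyDR {α β : ℝ} (hα : 0 < α) {F G : Finset ι → ℝ}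
    (hF : IsWeaklyDRSubmodular α F) (hG : IsWeaklyDRSupermodular β G)
    {S B : Finset ι} (hSB : S ⊆ B) {i : ι} (hi : i ∉ B) :
    (F (insert i B) - G (insert i B)) - (F B - G B) ≤
      ((1 / α) * F (insert i S) - β * G (insert i S)) - ((1 / α) * F S - β * G S) := by
  have hFi : F (insert i B) - F B ≤ (1 / α) * (F (insert i S) - F S) := by
    rw [one_div, ← div_eq_inv_mul, le_div_iff₀ hα]
    linarith [hF S B hSB i hi]
  linarith [hG S B hSB i hi]

end WeaklyDR

section LovaszChain

variable {n : ℕ} (π : Equiv.Perm (Fin n))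

theorem lovaszChain_zero : lovaszChain n π 0 = ∅ := by
  ext a; simp [lovaszChain]

theorem lovaszChain_self : lovaszChain n π n = univ := by
  ext a; simp [lovaszChain]

theorem lovaszChain_succ (k : Fin n) :
    lovaszChain n π (k + 1) = insert (π k) (lovaszChain n π k) := by
  ext a
  simp only [lovaszChain, mem_filter, mem_univ, true_and, mem_insert, Nat.lt_succ_iff_lt_or_eq,
    ← Fin.ext_iff, Equiv.symm_apply_eq]
  tauto

theorem apply_notMem_lovaszChain (k : Fin n) : π k ∉ lovaszChain n π k := by
  simp [lovaszChain]

theorem sum_le_sub_of_marginal_le {f Φ : Finset (Fin n) → ℝ} {g : Fin n → ℝ}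
    (hg : ∀ k : Fin n, g (π k) = f (lovaszChain n π (k + 1)) - f (lovaszChain n π k))
    (hΦ : ∀ S B : Finset (Fin n), S ⊆ B → ∀ i ∉ B,
      f (insert i B) - f B ≤ Φ (insert i S) - Φ S)
    (A : Finset (Fin n)) :
    ∑ i ∈ A, g i ≤ Φ A - Φ ∅ := by
  have hstep (k : Fin n) : (if π k ∈ A then g (π k) else 0) ≤
      Φ (A ∩ lovaszChain n π (k + 1)) - Φ (A ∩ lovaszChain n π k) := by
    rw [lovaszChain_succ]
    split_ifs with hk
    · rw [inter_insert_of_mem hk, hg, lovaszChain_succ]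
      exact hΦ _ _ inter_subset_right _ (apply_notMem_lovaszChain π k)
    · rw [inter_insert_of_notMem hk, sub_self]
  calc ∑ i ∈ A, g i = ∑ k : Fin n, if π k ∈ A then g (π k) else 0 := by
        rw [Fintype.sum_equiv π _ (fun i => if i ∈ A then g i else 0) fun _ => rfl, sum_ite_mem,
          univ_inter]
    _ ≤ ∑ k : Fin n, (Φ (A ∩ lovaszChain n π (k + 1)) - Φ (A ∩ lovaszChain n π k)) :=
        sum_le_sum fun k _ => hstep k
    _ = Φ (A ∩ lovaszChain n π n) - Φ (A ∩ lovaszChain n π 0) := by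
        rw [Fin.sum_univ_eq_sum_range (fun m => Φ (A ∩ lovaszChain n π (m + 1)) -
          Φ (A ∩ lovaszChain n π m))]
        exact sum_range_sub (fun m => Φ (A ∩ lovaszChain n π m)) n
    _ = Φ A - Φ ∅ := by rw [lovaszChain_self, lovaszChain_zero, inter_univ, inter_empty]

end LovaszChain

theorem subgradient_set_bound_general (n : ℕ) (α β : ℝ) (hα : 0 < α)
    (fbar fund : Finset (Fin n) → ℝ)
    (hbar0 : fbar ∅ = 0) (hund0 : fund ∅ = 0)
    (hbarDR : ∀ A B : Finset (Fin n), A ⊆ B → ∀ i ∉ B,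
      fbar (insert i A) - fbar A ≥ α * (fbar (insert i B) - fbar B))
    (hundDR : ∀ A B : Finset (Fin n), A ⊆ B → ∀ i ∉ B,
      fund (insert i B) - fund B ≥ β * (fund (insert i A) - fund A))
    (f : Finset (Fin n) → ℝ) (hfdef : ∀ S, f S = fbar S - fund S)
    (π : Equiv.Perm (Fin n))
    (g : Fin n → ℝ)
    (hg : ∀ k : Fin n, g (π k) = f (lovaszChain n π ((k : ℕ) + 1)) - f (lovaszChain n π (k : ℕ))) :
    ∀ A : Finset (Fin n), (∑ i ∈ A, g i) ≤ (1/α) * fbar A - β * fund A := by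
  intro A
  have hbound := sum_le_sub_of_marginal_le π (Φ := fun S => (1 / α) * fbar S - β * fund S) hg
    (fun S B hSB i hi => by
      simpa only [hfdef] using sub_marginal_le_of_isWeaklyDR hα hbarDR hundDR hSB hi) A
  simpa only [hbar0, hund0, mul_zero, sub_zero] using hbound

/-- For `f = f̄ − f̲` with `f̄` normalized nondecreasing `α`-weakly DR-submodular and
`f̲` normalized nondecreasing `β`-weakly DR-supermodular, the Lovász subgradient `g`
at `x` satisfies `g(A) ≤ (1/α) f̄(A) − β f̲(A)` for all `A`. -/
theorem subgradient_set_bound (n : ℕ) (α β : ℝ) (hα : 0 < α) (hβ : 0 < β)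
    (fbar fund : Finset (Fin n) → ℝ)
    (hbar0 : fbar ∅ = 0) (hund0 : fund ∅ = 0)
    (hbarmono : ∀ A B : Finset (Fin n), A ⊆ B → fbar A ≤ fbar B)
    (hundmono : ∀ A B : Finset (Fin n), A ⊆ B → fund A ≤ fund B)
    (hbarDR : ∀ A B : Finset (Fin n), A ⊆ B → ∀ i ∉ B,
      fbar (insert i A) - fbar A ≥ α * (fbar (insert i B) - fbar B))
    (hundDR : ∀ A B : Finset (Fin n), A ⊆ B → ∀ i ∉ B,
      fund (insert i B) - fund B ≥ β * (fund (insert i A) - fund A))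
    (f : Finset (Fin n) → ℝ) (hfdef : ∀ S, f S = fbar S - fund S)
    (x : Fin n → ℝ) (hx : ∀ j, x j ∈ Set.Icc (0:ℝ) 1)
    (π : Equiv.Perm (Fin n)) (v : ℕ → ℝ)
    (hv0 : v 0 = 1) (hvn : v (n+1) = 0)
    (hvx : ∀ k : Fin n, v ((k : ℕ) + 1) = x (π k))
    (hmono : ∀ i j : ℕ, i ≤ j → j ≤ n + 1 → v j ≤ v i)
    (g : Fin n → ℝ)
    (hg : ∀ k : Fin n, g (π k) = f (lovaszChain n π ((k : ℕ) + 1)) - f (lovaszChain n π (k : ℕ))) :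
    ∀ A : Finset (Fin n), (∑ i ∈ A, g i) ≤ (1/α) * fbar A - β * fund A :=
  subgradient_set_bound_general n α β hα fbar fund hbar0 hund0 hbarDR hundDR f hfdef π g hg
end

section
/- If f̄ is normalized nondecreasing α-weakly DR-submodular and f̲ is normalized nondecreasing β-weakly DR-supermodular with f̄([n]) + f̲([n]) ≤ L, then the Lovász subgradient vector g at any x ∈ [0,1]^n for f = f̄ − f̲ satisfies ‖g‖₂ ≤ L. -/
/-- If `f̄([n]) + f̲([n]) ≤ L` then the Lovász subgradient `g` of `f = f̄ − f̲`
satisfies `‖g‖₂ ≤ L`. -/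
theorem subgradient_norm_bound (n : ℕ) (α β L : ℝ) (hα : 0 < α) (hβ : 0 < β)
    (fbar fund : Finset (Fin n) → ℝ)
    (hbar0 : fbar ∅ = 0) (hund0 : fund ∅ = 0)
    (hbarmono : ∀ A B : Finset (Fin n), A ⊆ B → fbar A ≤ fbar B)
    (hundmono : ∀ A B : Finset (Fin n), A ⊆ B → fund A ≤ fund B)
    (hbarDR : ∀ A B : Finset (Fin n), A ⊆ B → ∀ i ∉ B,
      fbar (insert i A) - fbar A ≥ α * (fbar (insert i B) - fbar B))
    (hundDR : ∀ A B : Finset (Fin n), A ⊆ B → ∀ i ∉ B,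
      fund (insert i B) - fund B ≥ β * (fund (insert i A) - fund A))
    (hL : fbar Finset.univ + fund Finset.univ ≤ L)
    (f : Finset (Fin n) → ℝ) (hfdef : ∀ S, f S = fbar S - fund S)
    (x : Fin n → ℝ) (hx : ∀ j, x j ∈ Set.Icc (0:ℝ) 1)
    (π : Equiv.Perm (Fin n)) (v : ℕ → ℝ)
    (hv0 : v 0 = 1) (hvn : v (n+1) = 0)
    (hvx : ∀ k : Fin n, v ((k : ℕ) + 1) = x (π k))
    (hmono : ∀ i j : ℕ, i ≤ j → j ≤ n + 1 → v j ≤ v i)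
    (g : Fin n → ℝ)
    (hg : ∀ k : Fin n, g (π k) = f (lovaszChain n π ((k : ℕ) + 1)) - f (lovaszChain n π (k : ℕ))) :
    Real.sqrt (∑ j, (g j)^2) ≤ L := by
  set A : ℕ → Finset (Fin n) := lovaszChain n π with hA
  have hA0 : A 0 = ∅ := by
    simp [hA, lovaszChain]
  have hAn : A n = Finset.univ := by
    ext a; simp [hA, lovaszChain, (π.symm a).isLt]
  have hsub : ∀ k : ℕ, A k ⊆ A (k+1) := by
    intro k a ha
    simp only [hA, lovaszChain, Finset.mem_filter, Finset.mem_univ, true_and] at ha ⊢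
    exact Nat.lt_succ_of_lt ha
  have hgbound : ∀ k : Fin n, |g (π k)| ≤
      (fbar (A ((k:ℕ)+1)) - fbar (A (k:ℕ))) + (fund (A ((k:ℕ)+1)) - fund (A (k:ℕ))) := by
    intro k
    have h1 : fbar (A (k:ℕ)) ≤ fbar (A ((k:ℕ)+1)) := hbarmono _ _ (hsub k)
    have h2 : fund (A (k:ℕ)) ≤ fund (A ((k:ℕ)+1)) := hundmono _ _ (hsub k)
    rw [hg k, hfdef, hfdef, abs_le]
    constructor <;> simp [hA] <;> linarith
  have hsumabs : ∑ j, |g j| ≤ L := by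
    rw [← Equiv.sum_comp π (fun j => |g j|)]
    calc ∑ k : Fin n, |g (π k)|
        ≤ ∑ k : Fin n, ((fbar (A ((k:ℕ)+1)) - fbar (A (k:ℕ))) + (fund (A ((k:ℕ)+1)) - fund (A (k:ℕ)))) :=
          Finset.sum_le_sum (fun k _ => hgbound k)
      _ = (fbar (A n) - fbar (A 0)) + (fund (A n) - fund (A 0)) := by
          have t1 : ∑ i ∈ Finset.range n, (fbar (A (i+1)) - fbar (A i)) = fbar (A n) - fbar (A 0) :=
            Finset.sum_range_sub (fun i => fbar (A i)) n
          have t2 : ∑ i ∈ Finset.range n, (fund (A (i+1)) - fund (A i)) = fund (A n) - fund (A 0) :=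
            Finset.sum_range_sub (fun i => fund (A i)) n
          rw [Finset.sum_add_distrib,
            Fin.sum_univ_eq_sum_range (fun k => fbar (A (k+1)) - fbar (A k)),
            Fin.sum_univ_eq_sum_range (fun k => fund (A (k+1)) - fund (A k)), t1, t2]
      _ ≤ L := by rw [hA0, hAn, hbar0, hund0]; linarith
  have hsq : ∑ j, (g j)^2 ≤ (∑ j, |g j|)^2 := by
    rw [sq, Finset.sum_mul]
    apply Finset.sum_le_sum
    intro i _
    have h1 : |g i| ≤ ∑ j, |g j| :=
      Finset.single_le_sum (f := fun j => |g j|) (fun j _ => abs_nonneg _) (Finset.mem_univ i)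
    calc (g i)^2 = |g i| * |g i| := by rw [← sq_abs, sq]
      _ ≤ |g i| * ∑ j, |g j| := mul_le_mul_of_nonneg_left h1 (abs_nonneg _)
  calc Real.sqrt (∑ j, (g j)^2) ≤ Real.sqrt ((∑ j, |g j|)^2) := Real.sqrt_le_sqrt hsq
    _ = ∑ j, |g j| := Real.sqrt_sq (Finset.sum_nonneg (fun j _ => abs_nonneg _))
    _ ≤ L := hsumabs
end
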